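/- arXiv:1204.5540 — 4 statements merged into one kernel-verified Lean document; each statement's English description precedes it below -/
import Mathlib

section
/- For all real numbers x ≥ 0 and y ≥ 0, we have exp(2x·tanh(y)) ≥ (exp(x+y) + exp(-x-y)) / (exp(x-y) + exp(-x+y)). -/
/-!
Put `h(x) = log cosh (x + y) - log cosh (x - y)`; the right-hand side is `exp (h x)`, and `h 0 = 0`.
Its derivative is `tanh (x + y) - tanh (x - y) = sinh (2y) / (cosh (x + y) cosh (x - y))`, and since
`cosh (x + y) cosh (x - y) = sinh x ^ 2 + cosh y ^ 2 ≥ cosh y ^ 2`, it is at most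
`sinh (2y) / cosh y ^ 2 = 2 tanh y`. Hence `h x ≤ 2 x tanh y` for `x ≥ 0`.
-/

open Real

namespace Real

theorem tanh_sub_tanh (a b : ℝ) : tanh a - tanh b = sinh (a - b) / (cosh a * cosh b) := by
  have ha := (cosh_pos a).ne'
  have hb := (cosh_pos b).ne'
  rw [tanh_eq_sinh_div_cosh, tanh_eq_sinh_div_cosh, sinh_sub]
  field_simp

theorem cosh_add_mul_cosh_sub (x y : ℝ) :
    cosh (x + y) * cosh (x - y) = sinh x ^ 2 + cosh y ^ 2 := by
  rw [cosh_add, cosh_sub]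
  linear_combination cosh y ^ 2 * cosh_sq x + sinh x ^ 2 * cosh_sq y

theorem tanh_add_sub_tanh_sub_le (x : ℝ) {y : ℝ} (hy : 0 ≤ y) :
    tanh (x + y) - tanh (x - y) ≤ 2 * tanh y := by
  have hsinh : 0 ≤ 2 * sinh y * cosh y := by
    have := cosh_pos y
    have := sinh_nonneg_iff.mpr hy
    positivity
  calc tanh (x + y) - tanh (x - y) = 2 * sinh y * cosh y / (sinh x ^ 2 + cosh y ^ 2) := by
        rw [tanh_sub_tanh, cosh_add_mul_cosh_sub, add_sub_sub_cancel, ← two_mul, sinh_two_mul]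
    _ ≤ 2 * sinh y * cosh y / cosh y ^ 2 :=
        div_le_div_of_nonneg_left hsinh (by positivity [cosh_pos y])
          (le_add_of_nonneg_left (sq_nonneg _))
    _ = 2 * tanh y := by
        rw [tanh_eq_sinh_div_cosh]; field_simp [(cosh_pos y).ne']

theorem hasDerivAt_log_cosh (x : ℝ) : HasDerivAt (fun t ↦ log (cosh t)) (tanh x) x := by
  simpa [tanh_eq_sinh_div_cosh] using (hasDerivAt_cosh x).log (cosh_pos x).ne'

theorem log_cosh_add_sub_log_cosh_sub_le {x y : ℝ} (hx : 0 ≤ x) (hy : 0 ≤ y) :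
    log (cosh (x + y)) - log (cosh (x - y)) ≤ 2 * x * tanh y := by
  set g : ℝ → ℝ := fun x ↦ 2 * x * tanh y - log (cosh (x + y)) + log (cosh (x - y))
  have hderiv (x : ℝ) : HasDerivAt g (2 * tanh y - tanh (x + y) + tanh (x - y)) x := by
    have hlin := ((hasDerivAt_id x).const_mul 2).mul_const (tanh y)
    have hadd := (hasDerivAt_log_cosh (x + y)).comp_add_const x y
    have hsub := (hasDerivAt_log_cosh (x - y)).comp_sub_const x y
    simpa using (hlin.fun_sub hadd).fun_add hsub
  have hmono : Monotone g := by
    refine monotone_of_deriv_nonneg (fun x ↦ (hderiv x).differentiableAt) fun x ↦ ?_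
    rw [(hderiv x).deriv]
    linarith [tanh_add_sub_tanh_sub_le x hy]
  have hg : g 0 ≤ g x := hmono hx
  simp only [g, mul_zero, zero_mul, zero_add, zero_sub, cosh_neg] at hg
  linarith

end Real

theorem stmt_0 (x y : ℝ) (hx : 0 ≤ x) (hy : 0 ≤ y) :
    Real.exp (2 * x * Real.tanh y) ≥
      (Real.exp (x + y) + Real.exp (-x - y)) / (Real.exp (x - y) + Real.exp (-x + y)) := by
  have hratio : (exp (x + y) + exp (-x - y)) / (exp (x - y) + exp (-x + y))
      = exp (log (cosh (x + y)) - log (cosh (x - y))) := by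
    rw [show -x - y = -(x + y) by ring, show -x + y = -(x - y) by ring, exp_sub (log _),
      exp_log (cosh_pos _), exp_log (cosh_pos _), cosh_eq, cosh_eq,
      div_div_div_cancel_right₀ two_ne_zero]
  rw [hratio, ge_iff_le, exp_le_exp]
  exact log_cosh_add_sub_log_cosh_sub_le hx hy
end

section
/- For every u ∈ [0,1) and every z ≥ 0, the function f_u(z) = (1+u)·exp(u·z) + (1-u)·exp((1+u)·z) - (1+u)·exp(z) - (1-u) is nonnegative. -/
/-!
The derivative of `f_u = expGap u` is
`(1 + u) * (u * exp (u * z) + (1 - u) * exp ((1 + u) * z) - exp z)`, which is nonnegative for every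
real `z` by convexity of `exp`, since `u * (u * z) + (1 - u) * ((1 + u) * z) = z`. Hence `f_u` is
monotone on all of `ℝ`, and `f_u 0 = 0`.
-/

open Real

noncomputable def expGap (u z : ℝ) : ℝ :=
  (1 + u) * exp (u * z) + (1 - u) * exp ((1 + u) * z) - (1 + u) * exp z - (1 - u)

lemma exp_le_mul_exp_add_mul_exp {u : ℝ} (hu0 : 0 ≤ u) (hu1 : u ≤ 1) (x : ℝ) :
    exp x ≤ u * exp (u * x) + (1 - u) * exp ((1 + u) * x) := by
  have h := convexOn_exp.2 (Set.mem_univ (u * x)) (Set.mem_univ ((1 + u) * x)) hu0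
    (sub_nonneg.2 hu1) (add_sub_cancel u 1)
  simp only [smul_eq_mul] at h
  calc exp x = exp (u * (u * x) + (1 - u) * ((1 + u) * x)) := by ring_nf
    _ ≤ _ := h

lemma hasDerivAt_expGap (u z : ℝ) :
    HasDerivAt (expGap u)
      ((1 + u) * (u * exp (u * z) + (1 - u) * exp ((1 + u) * z) - exp z)) z := by
  have hexp (c : ℝ) : HasDerivAt (fun x => exp (c * x)) (exp (c * z) * c) z :=
    ((hasDerivAt_id z).const_mul c).exp.congr_deriv (by simp)
  exact ((((hexp u).const_mul (1 + u)).add ((hexp (1 + u)).const_mul (1 - u))).sub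
    ((hasDerivAt_exp z).const_mul (1 + u))).sub_const (1 - u) |>.congr_deriv (by ring)

lemma monotone_expGap {u : ℝ} (hu0 : 0 ≤ u) (hu1 : u ≤ 1) : Monotone (expGap u) := by
  refine monotone_of_deriv_nonneg (fun z => (hasDerivAt_expGap u z).differentiableAt) fun z => ?_
  rw [(hasDerivAt_expGap u z).deriv]
  exact mul_nonneg (by linarith) (sub_nonneg.2 (exp_le_mul_exp_add_mul_exp hu0 hu1 z))

lemma expGap_nonneg {u z : ℝ} (hu0 : 0 ≤ u) (hu1 : u ≤ 1) (hz : 0 ≤ z) : 0 ≤ expGap u z := by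
  have hzero : expGap u 0 = 0 := by simp [expGap]
  exact hzero ▸ monotone_expGap hu0 hu1 hz

theorem stmt_1 (u z : ℝ) (hu0 : 0 ≤ u) (hu1 : u < 1) (hz : 0 ≤ z) :
    0 ≤ (1 + u) * Real.exp (u * z) + (1 - u) * Real.exp ((1 + u) * z)
        - (1 + u) * Real.exp z - (1 - u) :=
  expGap_nonneg hu0 hu1.le hz
end

section
/- Consider a two-node Ising model on variables X₁, X₂ ∈ {-1,+1} with joint distribution P(x₁, x₂) ∝ exp(J·x₁x₂ + h₂·x₂) for real parameters J and h₂. Marginalizing over X₂ yields a distribution on X₁ proportional to exp(h₁'·x₁), where h₁' = (1/2)·log[(e^{J+h₂} + e^{-J-h₂})/(e^{-J+h₂} + e^{J-h₂})], and this induced field satisfies |h₁'| ≤ |h₂|·tanh(|J|). -/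
/-!
Since `e^x + e^{-x} = 2 cosh x`, the induced field is `h₁' = ½ (log cosh (J + h₂) - log cosh (J - h₂))`.
It is odd in `J` and in `h₂`, so it suffices to take `J, h₂ ≥ 0`. As a function of `h₂` its
derivative is `(tanh (J + h₂) + tanh (J - h₂)) / 2`, and `tanh u + tanh v = sinh (u + v) / (cosh u cosh v)`
with `cosh (J + x) cosh (J - x) = cosh² J + sinh² x ≥ cosh² J` bounds it by `tanh J`; integrating from
`h₂ = 0` gives `h₁' ≤ h₂ tanh J`.
-/

open Real

theorem Real.hasDerivAt_log_cosh_s3 (x : ℝ) : HasDerivAt (fun y => log (cosh y)) (tanh x) x := by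
  simpa [tanh_eq_sinh_div_cosh] using (hasDerivAt_cosh x).log (cosh_pos x).ne'

theorem Real.tanh_add_tanh (u v : ℝ) : tanh u + tanh v = sinh (u + v) / (cosh u * cosh v) := by
  rw [tanh_eq_sinh_div_cosh, tanh_eq_sinh_div_cosh, sinh_add]
  field_simp

theorem Real.cosh_add_mul_cosh_sub_s3 (a x : ℝ) :
    cosh (a + x) * cosh (a - x) = cosh a ^ 2 + sinh x ^ 2 := by
  rw [cosh_add, cosh_sub]
  linear_combination cosh a ^ 2 * cosh_sq_sub_sinh_sq x + sinh x ^ 2 * cosh_sq_sub_sinh_sq a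

theorem Real.tanh_add_add_tanh_sub_le {a : ℝ} (ha : 0 ≤ a) (x : ℝ) :
    tanh (a + x) + tanh (a - x) ≤ 2 * tanh a := by
  have hsinh : 0 ≤ sinh (2 * a) := sinh_nonneg_iff.mpr (by linarith)
  have hcosh : cosh a * cosh a ≤ cosh (a + x) * cosh (a - x) := by
    rw [cosh_add_mul_cosh_sub_s3]; nlinarith [sq_nonneg (sinh x)]
  calc tanh (a + x) + tanh (a - x) = sinh (2 * a) / (cosh (a + x) * cosh (a - x)) := by
        rw [tanh_add_tanh]; ring_nf
    _ ≤ sinh (2 * a) / (cosh a * cosh a) := by gcongr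
    _ = 2 * tanh a := by rw [two_mul, ← tanh_add_tanh]; ring

noncomputable def inducedField (J h : ℝ) : ℝ :=
  (1 / 2) * (log (cosh (J + h)) - log (cosh (J - h)))

theorem inducedField_neg_left (J h : ℝ) : inducedField (-J) h = -inducedField J h := by
  rw [inducedField, inducedField, ← cosh_neg (-J + h), ← cosh_neg (-J - h)]
  ring_nf

theorem inducedField_neg_right (J h : ℝ) : inducedField J (-h) = -inducedField J h := by
  rw [inducedField, inducedField, ← sub_eq_add_neg, sub_neg_eq_add]
  ring

theorem hasDerivAt_inducedField (J x : ℝ) :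
    HasDerivAt (inducedField J) ((tanh (J + x) + tanh (J - x)) / 2) x := by
  have hplus := (hasDerivAt_log_cosh_s3 (J + x)).comp_const_add J x
  have hminus := (hasDerivAt_log_cosh_s3 (J - x)).comp_const_sub J x
  exact ((hplus.sub hminus).const_mul (1 / 2)).congr_deriv (by ring)

theorem inducedField_nonneg {J h : ℝ} (hJ : 0 ≤ J) (hh : 0 ≤ h) : 0 ≤ inducedField J h := by
  have : cosh (J - h) ≤ cosh (J + h) := by
    rw [cosh_le_cosh, abs_of_nonneg (add_nonneg hJ hh)]
    exact abs_sub_le_iff.mpr ⟨by linarith, by linarith⟩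
  unfold inducedField
  linarith [log_le_log (cosh_pos _) this]

theorem inducedField_le {J h : ℝ} (hJ : 0 ≤ J) (hh : 0 ≤ h) : inducedField J h ≤ h * tanh J := by
  have hderiv x := hasDerivAt_inducedField J x
  have := image_sub_le_mul_sub_of_deriv_le (C := tanh J) (fun x => (hderiv x).differentiableAt)
    (fun x => by rw [(hderiv x).deriv]; linarith [tanh_add_add_tanh_sub_le hJ x]) hh
  simp only [inducedField, add_zero, sub_zero, sub_self, mul_zero] at this ⊢
  linarith

theorem abs_inducedField_le (J h : ℝ) : |inducedField J h| ≤ |h| * tanh |J| := by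
  have : |inducedField J h| = inducedField |J| |h| := by
    rw [← abs_of_nonneg (inducedField_nonneg (abs_nonneg J) (abs_nonneg h))]
    rcases abs_choice J with hJ | hJ <;> rcases abs_choice h with hh | hh <;>
      simp only [hJ, hh, inducedField_neg_left, inducedField_neg_right, abs_neg]
  rw [this]
  exact inducedField_le (abs_nonneg J) (abs_nonneg h)

theorem half_log_div_eq_inducedField (J h : ℝ) :
    (1 / 2) * log ((exp (J + h) + exp (-J - h)) / (exp (-J + h) + exp (J - h)))
      = inducedField J h := by
  have hplus : exp (J + h) + exp (-J - h) = 2 * cosh (J + h) := by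
    rw [cosh_eq, neg_add']; ring
  have hminus : exp (-J + h) + exp (J - h) = 2 * cosh (J - h) := by
    rw [cosh_eq, neg_sub, neg_add_eq_sub]; ring
  rw [inducedField, hplus, hminus, mul_div_mul_left _ _ two_ne_zero,
    log_div (cosh_pos _).ne' (cosh_pos _).ne']

theorem exists_pos_eq_mul_exp_half_log_div {A B : ℝ} (hA : 0 < A) (hB : 0 < B) :
    ∃ c, 0 < c ∧ A = c * exp (1 / 2 * log (A / B)) ∧ B = c * exp (-(1 / 2 * log (A / B))) := by
  refine ⟨exp ((log A + log B) / 2), exp_pos _, ?_, ?_⟩ <;>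
    rw [← exp_add, log_div hA.ne' hB.ne']
  · conv_lhs => rw [← exp_log hA]
    ring_nf
  · conv_lhs => rw [← exp_log hB]
    ring_nf

/-- Two-node Ising model: marginalizing the leaf `X₂` induces an external field `h₁'`
on node 1, with an explicit formula and the bound `|h₁'| ≤ |h₂| · tanh |J|`. -/
theorem stmt_3 (J h₂ : ℝ) :
    let h₁' : ℝ := (1 / 2) * Real.log ((Real.exp (J + h₂) + Real.exp (-J - h₂)) /
        (Real.exp (-J + h₂) + Real.exp (J - h₂)))
    (∃ c : ℝ, 0 < c ∧ ∀ x₁ : ℝ, x₁ = 1 ∨ x₁ = -1 →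
        Real.exp (J * x₁ * 1 + h₂ * 1) + Real.exp (J * x₁ * (-1) + h₂ * (-1))
          = c * Real.exp (h₁' * x₁)) ∧
    |h₁'| ≤ |h₂| * Real.tanh |J| := by
  dsimp only
  obtain ⟨c, hc, hplus, hminus⟩ := exists_pos_eq_mul_exp_half_log_div
    (A := exp (J + h₂) + exp (-J - h₂)) (B := exp (-J + h₂) + exp (J - h₂))
    (by positivity) (by positivity)
  refine ⟨⟨c, hc, ?_⟩, ?_⟩
  · rintro x₁ (rfl | rfl)
    · convert hplus using 3 <;> ring
    · convert hminus using 3 <;> ring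
  · rw [half_log_div_eq_inducedField]
    exact abs_inducedField_le J h₂
end

section
/- Let X₁ — X_l — X₂ be a Markov chain of discrete random variables with X₁ and X_l binary-influenced in the sense that |P(x₁|X_l = a) - P(x₁|X_l = b)| ≤ α for all values a, b and |P(x_l|X₂ = a) - P(x_l|X₂ = b)| ≤ β for all a, b, where X_l takes values in {-1,+1}. Then |P(x₁|X₂ = a) - P(x₁|X₂ = b)| ≤ α·β for all x₁ and all values a, b of X₂. -/
/-- Markov chain composition step for correlation decay: if `X₁ — X_l — X₂` is a Markov
chain with `X_l ∈ {-1,+1}` (modeled as `Bool`), the influence of `X_l` on `X₁` is at most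
`α`, and the influence of `X₂` on `X_l` is at most `β`, then the influence of `X₂` on
`X₁` is at most `α·β`. Here `p x₁ xl = P(x₁ | xl)` and `q xl x₂ = P(xl | x₂)`. -/
theorem stmt_5 {A C : Type*} (p : A → Bool → ℝ) (q : Bool → C → ℝ) (α β : ℝ)
    (hq : ∀ c, q true c + q false c = 1)
    (hp : ∀ x₁ a b, |p x₁ a - p x₁ b| ≤ α)
    (hqb : ∀ xl c c', |q xl c - q xl c'| ≤ β)
    (x₁ : A) (c c' : C) :
    |(p x₁ true * q true c + p x₁ false * q false c)
      - (p x₁ true * q true c' + p x₁ false * q false c')| ≤ α * β := by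
  have h1 := hq c
  have h2 := hq c'
  have key : (p x₁ true * q true c + p x₁ false * q false c)
      - (p x₁ true * q true c' + p x₁ false * q false c')
      = (p x₁ true - p x₁ false) * (q true c - q true c') := by
    have : q false c = 1 - q true c := by linarith
    have : q false c' = 1 - q true c' := by linarith
    rw [‹q false c = 1 - q true c›, ‹q false c' = 1 - q true c'›]; ring
  rw [key, abs_mul]
  exact mul_le_mul (hp x₁ true false) (hqb true c c') (abs_nonneg _) ((abs_nonneg _).trans (hp x₁ true false))
end
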